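/- For partitions (deterministic programs) P and P' of a finite set, P ⊑ P' in the refinement order if and only if for every distribution μ the min-entropy leakage satisfies ME_μ(P) ≤ ME_μ(P'). -/

import Mathlib

open Finset

variable {σ : Type*} [Fintype σ] [DecidableEq σ]

/-- A probability distribution on a finite type. -/
def IsDist (μ : σ → ℝ) : Prop := (∀ x, 0 ≤ μ x) ∧ ∑ x, μ x = 1

/-- `Refines X Y` : `X ⊑ Y`, i.e. every block of `Y` is contained in some block of `X`. -/
def Refines (X Y : Finpartition (univ : Finset σ)) : Prop :=
  ∀ B ∈ Y.parts, ∃ C ∈ X.parts, B ⊆ C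

/-- The common refinement (the paper's join `X ⊔ Y`). -/
def pJoin (X Y : Finpartition (univ : Finset σ)) : Finpartition (univ : Finset σ) := X ⊓ Y

/-- The setoid associated to a finpartition. -/
def toSetoid (X : Finpartition (univ : Finset σ)) : Setoid σ where
  r x y := ∃ B ∈ X.parts, x ∈ B ∧ y ∈ B
  iseqv := by
    constructor
    · intro x
      obtain ⟨B, hB, hx⟩ := X.exists_mem (mem_univ x)
      exact ⟨B, hB, hx, hx⟩
    · rintro x y ⟨B, hB, hx, hy⟩; exact ⟨B, hB, hy, hx⟩
    · rintro x y z ⟨B, hB, hx, hy⟩ ⟨C, hC, hy', hz⟩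
      exact ⟨B, hB, hx, X.eq_of_mem_parts hC hB hy' hy ▸ hz⟩

/-- The coarsest common coarsening (the paper's meet `X ⊓ Y`). -/
noncomputable def pMeet (X Y : Finpartition (univ : Finset σ)) : Finpartition (univ : Finset σ) :=
  letI : DecidableRel (toSetoid X ⊔ toSetoid Y).r := Classical.decRel _
  Finpartition.ofSetoid (toSetoid X ⊔ toSetoid Y)

/-- Sum of the `n` largest `μ`-probabilities among the elements of `B`. -/
def gGuess (μ : σ → ℝ) (n : ℕ) (B : Finset σ) : ℝ :=
  (B.powerset.filter fun S => S.card ≤ n).sup' ⟨∅, by simp⟩ fun S => ∑ x ∈ S, μ x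

/-- Expected probability of guessing in `n` tries given partition `X`. -/
def GGuess (μ : σ → ℝ) (n : ℕ) (X : Finpartition (univ : Finset σ)) : ℝ :=
  ∑ B ∈ X.parts, gGuess μ n B

/-- Expected number of guesses for a block `B` (elements asked in order of
decreasing probability, i.e. the ordering minimising the expected rank). -/
noncomputable def NGset (μ : σ → ℝ) (B : Finset σ) : ℝ :=
  ⨅ e : B ≃ Fin B.card, ∑ x ∈ B.attach, ((e x : ℕ) + 1 : ℝ) * μ x

/-- Expected number of guesses given a partition. -/
noncomputable def NGpart (μ : σ → ℝ) (X : Finpartition (univ : Finset σ)) : ℝ :=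
  ∑ B ∈ X.parts, NGset μ B

/-- Shannon entropy (base 2) of the block distribution induced by `μ` on `X`. -/
noncomputable def entropy (μ : σ → ℝ) (X : Finpartition (univ : Finset σ)) : ℝ :=
  - ∑ B ∈ X.parts, (∑ x ∈ B, μ x) * Real.logb 2 (∑ x ∈ B, μ x)

/-- Conditional entropy `H(X|Y) = H(X ⊔ Y) - H(Y)`. -/
noncomputable def condEntropy (μ : σ → ℝ) (X Y : Finpartition (univ : Finset σ)) : ℝ :=
  entropy μ (pJoin X Y) - entropy μ Y

/-- Mutual information `I(X;Y) = H(X) + H(Y) - H(X ⊔ Y)`. -/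
noncomputable def mutualInfo (μ : σ → ℝ) (X Y : Finpartition (univ : Finset σ)) : ℝ :=
  entropy μ X + entropy μ Y - entropy μ (pJoin X Y)

/-- Maximum probability in a block. -/
noncomputable def fmax (μ : σ → ℝ) (B : Finset σ) : ℝ := WithBot.unbotD 0 ((B.image μ).max)

/-- Min-entropy leakage of a partition. -/
noncomputable def MEleak (μ : σ → ℝ) (X : Finpartition (univ : Finset σ)) : ℝ :=
  Real.logb 2 (∑ B ∈ X.parts, fmax μ B) - Real.logb 2 (fmax μ (univ : Finset σ))

/-- Kernel partition of a function on a finite type. -/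
def kerP {O : Type*} [DecidableEq O] (f : σ → O) : Finpartition (univ : Finset σ) :=
  letI : DecidableRel (Setoid.ker f).r := fun a b => decEq (f a) (f b)
  Finpartition.ofSetoid (Setoid.ker f)

/-!
Both leakages subtract the same term `log max μ`, so `ME_μ(P) ≤ ME_μ(P')` is equivalent to
`∑_{C ∈ P} max_C μ ≤ ∑_{B ∈ P'} max_B μ`. If `P'` refines `P`, each block `C` of `P` contains
the block of `P'` through a maximiser of `μ` on `C`, and distinct blocks of `P` yield distinct
blocks of `P'`. Conversely, if `x` and `y` share a block of `P'` but not of `P`, the uniform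
distribution on `{x, y}` makes the left sum at least `1` and the right one `1/2`.
-/
theorem Finpartition.sum_le_sum_of_forall_exists_subset {α M : Type*} [DecidableEq α]
    [AddCommMonoid M] [PartialOrder M] [IsOrderedAddMonoid M] {s : Finset α}
    (P Q : Finpartition s) {f g : Finset α → M} (hg : ∀ B ∈ Q.parts, 0 ≤ g B)
    (hfg : ∀ C ∈ P.parts, ∃ B ∈ Q.parts, B ⊆ C ∧ f C ≤ g B) :
    ∑ C ∈ P.parts, f C ≤ ∑ B ∈ Q.parts, g B := by
  choose e he_mem he_sub hfe using hfg
  -- distinct parts of `P` are disjoint, so they cannot contain the same nonempty part of `Q`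
  have he_inj : Set.InjOn (fun C : P.parts => e C.1 C.2) Set.univ := by
    rintro ⟨C₁, h₁⟩ - ⟨C₂, h₂⟩ - heq
    obtain ⟨z, hz⟩ := Q.nonempty_of_mem_parts (he_mem C₁ h₁)
    have hz₂ : z ∈ e C₂ h₂ := by simpa only [heq] using hz
    exact Subtype.ext <| P.eq_of_mem_parts h₁ h₂ (he_sub C₁ h₁ hz) (he_sub C₂ h₂ hz₂)
  calc ∑ C ∈ P.parts, f C
      = ∑ C ∈ P.parts.attach, f C := (sum_attach _ _).symm
    _ ≤ ∑ C ∈ P.parts.attach, g (e C.1 C.2) := sum_le_sum fun C _ => hfe C.1 C.2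
    _ = ∑ B ∈ P.parts.attach.image (fun C => e C.1 C.2), g B :=
        (sum_image fun C₁ _ C₂ _ h => he_inj trivial trivial h).symm
    _ ≤ ∑ B ∈ Q.parts, g B := by
        refine sum_le_sum_of_subset_of_nonneg ?_ fun B hB _ => hg B hB
        rintro B hB
        obtain ⟨C, -, rfl⟩ := mem_image.1 hB
        exact he_mem C.1 C.2

section fmax

variable {α : Type*} (μ : α → ℝ)

lemma le_fmax {x : α} {B : Finset α} (hx : x ∈ B) : μ x ≤ fmax μ B := by
  obtain ⟨m, hm⟩ := max_of_mem (mem_image_of_mem μ hx)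
  have := le_max (mem_image_of_mem μ hx)
  rw [hm] at this
  rw [fmax, hm]
  exact_mod_cast this

lemma exists_mem_fmax_eq {B : Finset α} (hB : B.Nonempty) : ∃ x ∈ B, fmax μ B = μ x := by
  obtain ⟨m, hm⟩ := max_of_nonempty (hB.image μ)
  obtain ⟨x, hx, rfl⟩ := mem_image.1 (mem_of_max hm)
  exact ⟨x, hx, by rw [fmax, hm]; rfl⟩

variable {μ}

lemma fmax_le {c : ℝ} {B : Finset α} (hc : 0 ≤ c) (h : ∀ x ∈ B, μ x ≤ c) : fmax μ B ≤ c := by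
  rcases B.eq_empty_or_nonempty with rfl | hB
  · simpa [fmax] using hc
  · obtain ⟨x, hx, hfx⟩ := exists_mem_fmax_eq μ hB
    exact hfx ▸ h x hx

lemma fmax_nonneg (hμ : ∀ x, 0 ≤ μ x) (B : Finset α) : 0 ≤ fmax μ B := by
  rcases B.eq_empty_or_nonempty with rfl | hB
  · simp [fmax]
  · obtain ⟨x, -, hfx⟩ := exists_mem_fmax_eq μ hB
    exact hfx ▸ hμ x

lemma sum_fmax_le_sum_fmax_of_le [DecidableEq α] {s : Finset α} {P Q : Finpartition s}
    (hQP : Q ≤ P) (hμ : ∀ x, 0 ≤ μ x) : ∑ C ∈ P.parts, fmax μ C ≤ ∑ B ∈ Q.parts, fmax μ B := by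
  refine P.sum_le_sum_of_forall_exists_subset Q (fun B _ => fmax_nonneg hμ B) fun C hC => ?_
  obtain ⟨x, hxC, hfx⟩ := exists_mem_fmax_eq μ (P.nonempty_of_mem_parts hC)
  obtain ⟨B, hB, hxB⟩ := Q.exists_mem (P.subset hC hxC)
  obtain ⟨C', hC', hBC'⟩ := hQP hB
  obtain rfl : C' = C := P.eq_of_mem_parts hC' hC (hBC' hxB) hxC
  exact ⟨B, hB, hBC', hfx ▸ le_fmax μ hxB⟩

variable {μ : σ → ℝ}

lemma sum_fmax_pos (hμ : IsDist μ) (X : Finpartition (univ : Finset σ)) :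
    0 < ∑ B ∈ X.parts, fmax μ B := by
  obtain ⟨x, hx⟩ : ∃ x, 0 < μ x := by
    by_contra! h
    have : ∑ x, μ x = 0 := sum_eq_zero fun x _ => le_antisymm (h x) (hμ.1 x)
    linarith [hμ.2]
  obtain ⟨B, hB, hxB⟩ := X.exists_mem (mem_univ x)
  calc 0 < fmax μ B := hx.trans_le (le_fmax μ hxB)
    _ ≤ _ := single_le_sum (fun C _ => fmax_nonneg hμ.1 C) hB

lemma MEleak_le_MEleak_iff (hμ : IsDist μ) (X Y : Finpartition (univ : Finset σ)) :
    MEleak μ X ≤ MEleak μ Y ↔ ∑ B ∈ X.parts, fmax μ B ≤ ∑ B ∈ Y.parts, fmax μ B := by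
  rw [MEleak, MEleak, sub_le_sub_iff_right]
  exact Real.logb_le_logb one_lt_two (sum_fmax_pos hμ X) (sum_fmax_pos hμ Y)

end fmax

lemma refines_iff_le (X Y : Finpartition (univ : Finset σ)) : Refines X Y ↔ Y ≤ X := Iff.rfl

lemma refines_of_toSetoid_le {X Y : Finpartition (univ : Finset σ)}
    (h : toSetoid Y ≤ toSetoid X) : Refines X Y := by
  intro B hB
  obtain ⟨x, hxB⟩ := Y.nonempty_of_mem_parts hB
  obtain ⟨C, hC, hxC⟩ := X.exists_mem (mem_univ x)
  refine ⟨C, hC, fun y hyB => ?_⟩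
  obtain ⟨C', hC', hxC', hyC'⟩ := h ⟨B, hB, hxB, hyB⟩
  exact X.eq_of_mem_parts hC' hC hxC' hxC ▸ hyC'

section pairDist

variable {α : Type*} [DecidableEq α]

noncomputable def pairDist (x y : α) (z : α) : ℝ := if z ∈ ({x, y} : Finset α) then 1 / 2 else 0

variable {x y : α}

lemma pairDist_nonneg (z : α) : 0 ≤ pairDist x y z := by
  unfold pairDist; split_ifs <;> norm_num

lemma pairDist_le (z : α) : pairDist x y z ≤ 1 / 2 := by
  unfold pairDist; split_ifs <;> norm_num

lemma pairDist_left : pairDist x y x = 1 / 2 := by simp [pairDist]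

lemma pairDist_right : pairDist x y y = 1 / 2 := by simp [pairDist]

lemma isDist_pairDist [Fintype α] (hxy : x ≠ y) : IsDist (pairDist x y) := by
  refine ⟨pairDist_nonneg, ?_⟩
  simp only [pairDist]
  rw [sum_ite_mem, univ_inter, sum_const, card_pair hxy]
  norm_num

lemma sum_fmax_pairDist_le_of_rel {x y : σ} {X : Finpartition (univ : Finset σ)}
    (h : toSetoid X x y) : ∑ B ∈ X.parts, fmax (pairDist x y) B ≤ 1 / 2 := by
  obtain ⟨B, hB, hxB, hyB⟩ := h
  rw [sum_eq_single_of_mem B hB]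
  · exact fmax_le (by norm_num) fun z _ => pairDist_le z
  · intro B' hB' hne
    have hdisj := disjoint_left.1 (X.disjoint hB' hB hne)
    refine le_antisymm (fmax_le le_rfl fun z hz => ?_) (fmax_nonneg pairDist_nonneg B')
    have : z ∉ ({x, y} : Finset σ) := by
      simp only [mem_insert, mem_singleton]
      rintro (rfl | rfl) <;> exact hdisj hz ‹_›
    simp [pairDist, this]

lemma one_le_sum_fmax_pairDist_of_not_rel {x y : σ} {X : Finpartition (univ : Finset σ)}
    (h : ¬ toSetoid X x y) : 1 ≤ ∑ C ∈ X.parts, fmax (pairDist x y) C := by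
  obtain ⟨C, hC, hxC⟩ := X.exists_mem (mem_univ x)
  obtain ⟨C', hC', hyC'⟩ := X.exists_mem (mem_univ y)
  have hCC' : C ≠ C' := by rintro rfl; exact h ⟨C, hC, hxC, hyC'⟩
  calc (1 : ℝ) = pairDist x y x + pairDist x y y := by rw [pairDist_left, pairDist_right]; norm_num
    _ ≤ fmax (pairDist x y) C + fmax (pairDist x y) C' :=
        add_le_add (le_fmax _ hxC) (le_fmax _ hyC')
    _ = ∑ D ∈ {C, C'}, fmax (pairDist x y) D := (sum_pair hCC').symm
    _ ≤ _ := sum_le_sum_of_subset_of_nonneg (insert_subset hC (singleton_subset_iff.2 hC'))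
        fun D _ _ => fmax_nonneg pairDist_nonneg D

end pairDist

theorem refines_iff_forall_MEleak_le (P P' : Finpartition (univ : Finset σ)) :
    Refines P P' ↔ ∀ μ : σ → ℝ, IsDist μ → MEleak μ P ≤ MEleak μ P' := by
  refine ⟨fun h μ hμ => ?_, fun h => refines_of_toSetoid_le fun {x y} hP' => ?_⟩
  · rw [MEleak_le_MEleak_iff hμ]
    exact sum_fmax_le_sum_fmax_of_le ((refines_iff_le P P').1 h) hμ.1
  · by_contra hP
    have hxy : x ≠ y := by rintro rfl; exact hP ((toSetoid P).refl x)
    have hle := (MEleak_le_MEleak_iff (isDist_pairDist hxy) P P').1 (h _ (isDist_pairDist hxy))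
    linarith [one_le_sum_fmax_pairDist_of_not_rel hP, sum_fmax_pairDist_le_of_rel hP']
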